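/- arXiv:1410.1141 — 2 statements merged into one kernel-verified Lean document; each statement's English description precedes it below -/
import Mathlib

section
/- Let d, m be positive integers, let x₁, …, x_m ∈ ℝ^d, let α₁, …, α_m be real numbers, and define F(w, u, v) = Σ_{i=1}^m αᵢ·⟨w, xᵢ⟩·⟨u, xᵢ⟩·⟨v, xᵢ⟩ for w, u, v ∈ ℝ^d. Let (w*, u*, v*) be unit vectors attaining the maximum of F over all triples of unit vectors, let τ ∈ [0, 1], let w₁ be a unit vector with ⟨w₁, w*⟩ ≥ 1/√(2d), and let u₁, v₁ be unit vectors satisfying F(w₁, u₁, v₁) ≥ (1 − τ)·sup{ F(w₁, u, v) : ‖u‖ = ‖v‖ = 1 }. Then F(w₁, u₁, v₁) ≥ ((1 − τ)/√(2d))·F(w*, u*, v*). -/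
open scoped RealInnerProductSpace

/-!
For fixed `u*, v*`, the map `w ↦ F(w, u*, v*)` is the linear functional `⟪w, g⟫` with
`g = ∑ᵢ αᵢ⟪u*, xᵢ⟫⟪v*, xᵢ⟫ xᵢ`. Since `w*` maximizes it over the unit sphere, the equality case
of Cauchy–Schwarz forces `g = ‖g‖ w*`, so `F(w*, u*, v*) = ‖g‖` and
`F(w₁, u*, v*) = ‖g‖⟪w₁, w*⟫ ≥ F(w*, u*, v*)/√(2d)`. The bilinear approximation guarantee
applied at `(u*, v*)` loses the remaining factor `1 − τ`.
-/

theorem eq_norm_smul_of_forall_inner_le_inner {E : Type*} [NormedAddCommGroup E]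
    [InnerProductSpace ℝ E] {g w₀ : E} (hw₀ : ‖w₀‖ = 1)
    (hmax : ∀ w : E, ‖w‖ = 1 → ⟪w, g⟫ ≤ ⟪w₀, g⟫) : g = ‖g‖ • w₀ := by
  rcases eq_or_ne g 0 with rfl | hg
  · simp
  have hg' : ‖g‖ ≠ 0 := norm_ne_zero_iff.mpr hg
  have hle : ‖g‖ ≤ ⟪w₀, g⟫ := by
    have h := hmax (‖g‖⁻¹ • g) (by rw [norm_smul, norm_inv, norm_norm, inv_mul_cancel₀ hg'])
    rwa [real_inner_smul_left, real_inner_self_eq_norm_sq, sq, inv_mul_cancel_left₀ hg'] at h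
  have heq : ⟪w₀, g⟫ = ‖w₀‖ * ‖g‖ :=
    le_antisymm (real_inner_le_norm _ _) (by rwa [hw₀, one_mul])
  simpa [hw₀] using (inner_eq_norm_mul_iff_real.mp heq).symm

theorem approx_tensor_maximization_general
    (d m : ℕ)
    (x : Fin m → EuclideanSpace ℝ (Fin d)) (α : Fin m → ℝ)
    (F : EuclideanSpace ℝ (Fin d) → EuclideanSpace ℝ (Fin d) →
         EuclideanSpace ℝ (Fin d) → ℝ)
    (hF : ∀ w u v, F w u v = ∑ i, α i * ⟪w, x i⟫ * ⟪u, x i⟫ * ⟪v, x i⟫)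
    (wstar ustar vstar : EuclideanSpace ℝ (Fin d))
    (hwstar : ‖wstar‖ = 1) (hustar : ‖ustar‖ = 1) (hvstar : ‖vstar‖ = 1)
    (hmax : ∀ w u v : EuclideanSpace ℝ (Fin d),
      ‖w‖ = 1 → ‖u‖ = 1 → ‖v‖ = 1 → F w u v ≤ F wstar ustar vstar)
    (τ : ℝ) (hτ1 : τ ≤ 1)
    (w₁ : EuclideanSpace ℝ (Fin d))
    (hcorr : ⟪w₁, wstar⟫ ≥ 1 / Real.sqrt (2 * d))
    (u₁ v₁ : EuclideanSpace ℝ (Fin d))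
    (happrox : ∀ u v : EuclideanSpace ℝ (Fin d), ‖u‖ = 1 → ‖v‖ = 1 →
      F w₁ u₁ v₁ ≥ (1 - τ) * F w₁ u v) :
    F w₁ u₁ v₁ ≥ ((1 - τ) / Real.sqrt (2 * d)) * F wstar ustar vstar := by
  set g := ∑ i, (α i * ⟪ustar, x i⟫ * ⟪vstar, x i⟫) • x i
  have hFg : ∀ w, F w ustar vstar = ⟪w, g⟫ := fun w => by
    simp only [hF, g, inner_sum, real_inner_smul_right]
    exact Finset.sum_congr rfl fun i _ => by ring
  have hg : g = ‖g‖ • wstar := eq_norm_smul_of_forall_inner_le_inner hwstar fun w hw => by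
    simpa only [hFg] using hmax w ustar vstar hw hustar hvstar
  have hFw : ∀ w, F w ustar vstar = ‖g‖ * ⟪w, wstar⟫ := fun w => by
    rw [hFg, ← real_inner_smul_right, ← hg]
  have hFstar : F wstar ustar vstar = ‖g‖ := by
    rw [hFw, real_inner_self_eq_norm_sq, hwstar, one_pow, mul_one]
  calc ((1 - τ) / Real.sqrt (2 * d)) * F wstar ustar vstar
      = (1 - τ) * (‖g‖ * (1 / Real.sqrt (2 * d))) := by rw [hFstar]; ring
    _ ≤ (1 - τ) * (‖g‖ * ⟪w₁, wstar⟫) := by gcongr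
    _ = (1 - τ) * F w₁ ustar vstar := by rw [hFw]
    _ ≤ F w₁ u₁ v₁ := happrox ustar vstar hustar hvstar

/-- Deterministic core of Lemma A.3: if `w₁` is a unit vector with
`⟨w₁, w*⟩ ≥ 1/√(2d)` and `(u₁, v₁)` is a `(1−τ)`-approximate bilinear maximizer of
`F(w₁, ·, ·)`, then `(w₁, u₁, v₁)` is a `((1−τ)/√(2d))`-approximate maximizer of the
trilinear form `F`. -/
theorem approx_tensor_maximization
    (d m : ℕ) (hd : 0 < d) (hm : 0 < m)
    (x : Fin m → EuclideanSpace ℝ (Fin d)) (α : Fin m → ℝ)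
    (F : EuclideanSpace ℝ (Fin d) → EuclideanSpace ℝ (Fin d) →
         EuclideanSpace ℝ (Fin d) → ℝ)
    (hF : ∀ w u v, F w u v = ∑ i, α i * ⟪w, x i⟫ * ⟪u, x i⟫ * ⟪v, x i⟫)
    (wstar ustar vstar : EuclideanSpace ℝ (Fin d))
    (hwstar : ‖wstar‖ = 1) (hustar : ‖ustar‖ = 1) (hvstar : ‖vstar‖ = 1)
    (hmax : ∀ w u v : EuclideanSpace ℝ (Fin d),
      ‖w‖ = 1 → ‖u‖ = 1 → ‖v‖ = 1 → F w u v ≤ F wstar ustar vstar)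
    (τ : ℝ) (hτ0 : 0 ≤ τ) (hτ1 : τ ≤ 1)
    (w₁ : EuclideanSpace ℝ (Fin d)) (hw₁ : ‖w₁‖ = 1)
    (hcorr : ⟪w₁, wstar⟫ ≥ 1 / Real.sqrt (2 * d))
    (u₁ v₁ : EuclideanSpace ℝ (Fin d)) (hu₁ : ‖u₁‖ = 1) (hv₁ : ‖v₁‖ = 1)
    (happrox : ∀ u v : EuclideanSpace ℝ (Fin d), ‖u‖ = 1 → ‖v‖ = 1 →
      F w₁ u₁ v₁ ≥ (1 - τ) * F w₁ u v) :
    F w₁ u₁ v₁ ≥ ((1 - τ) / Real.sqrt (2 * d)) * F wstar ustar vstar :=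
  approx_tensor_maximization_general d m x α F hF wstar ustar vstar hwstar hustar hvstar hmax τ hτ1
    w₁ hcorr u₁ v₁ happrox
end

section
/- Let d, m, s be positive integers, let x₁, …, x_m ∈ ℝ^d, let α₁, …, α_m be real numbers, and define F(w, u, v) = Σ_{i=1}^m αᵢ·⟨w, xᵢ⟩·⟨u, xᵢ⟩·⟨v, xᵢ⟩ for w, u, v ∈ ℝ^d. Let w₁, …, w_s be independent random vectors in ℝ^d, each with i.i.d. standard normal N(0,1) coordinates, and let ŵ_t = w_t/‖w_t‖. Then with probability at least 1 − (1 − 1/(2d − 1))^s, there exists t ≤ s such that sup{ F(ŵ_t, u, v) : ‖u‖ = ‖v‖ = 1 } ≥ (1/√(2d)) · sup{ F(w, u, v) : ‖w‖ = ‖u‖ = ‖v‖ = 1 }. In particular, for δ ∈ (0,1), if s ≥ (2d − 1)·ln(1/δ) this holds with probability at least 1 − δ. -/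
/-!
Let `(w₀, u₀, v₀)` maximise `F` on the product of unit spheres and let `g` be the gradient of the
linear map `w ↦ F w u₀ v₀`, so that `F w u₀ v₀ = ⟨g, w⟩` and `max F = ⟨g, w₀⟩ ≤ ‖g‖`. Replacing
`u₀` by `-u₀` shows `sup_{u,v} F ŵ u v ≥ |⟨g, ŵ⟩|`, so a direction `ŵ` is good as soon as
`⟨g, ŵ⟩² ≥ ‖g‖² / (2d)`.

For coordinates that are i.i.d., symmetric and atomless, sign changes and permutations of the
coordinates preserve the law, so `E[w_j w_k / ‖w‖²] = δ_jk / d` and `Z = ⟨g, ŵ⟩²` has mean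
`‖g‖² / d`. Since `Z ≤ ‖g‖²`, the reverse Markov inequality `E Z ≤ b + (‖g‖² - b) P(Z ≥ b)`
gives `P(Z ≥ ‖g‖² / (2d)) ≥ 1 / (2d - 1)`.
The `s` restarts are independent, so all of them fail with probability at most
`(1 - 1/(2d-1))^s ≤ exp(-s/(2d-1))`.
-/

open MeasureTheory ProbabilityTheory Finset

lemma MeasureTheory.MeasurePreserving.integral_comp_of_measurable {α : Type*} [MeasurableSpace α]
    {ν : Measure α} {T : α → α} (hT : MeasurePreserving T ν ν) {f : α → ℝ} (hf : Measurable f) :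
    ∫ a, f (T a) ∂ν = ∫ a, f a ∂ν := by
  rw [← integral_map hT.measurable.aemeasurable hf.aestronglyMeasurable, hT.map_eq]

lemma integral_le_add_mul_measureReal_le {Ω : Type*} [MeasurableSpace Ω] {P : Measure Ω}
    [IsProbabilityMeasure P] {Z : Ω → ℝ} (hZm : Measurable Z) (hZ : Integrable Z P) {b c : ℝ}
    (hZc : ∀ ω, Z ω ≤ c) :
    ∫ ω, Z ω ∂P ≤ b + (c - b) * P.real {ω | b ≤ Z ω} := by
  have hA : MeasurableSet {ω | b ≤ Z ω} := measurableSet_le measurable_const hZm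
  calc ∫ ω, Z ω ∂P ≤ ∫ ω, b + {ω | b ≤ Z ω}.indicator (fun _ => c - b) ω ∂P := by
        refine integral_mono hZ ((integrable_const b).add ((integrable_const _).indicator hA))
          fun ω => ?_
        by_cases h : b ≤ Z ω
        · simp [Set.indicator_of_mem (show ω ∈ {ω | b ≤ Z ω} from h), hZc ω]
        · simp [Set.indicator_of_notMem (show ω ∉ {ω | b ≤ Z ω} from h), (not_le.mp h).le]
    _ = b + (c - b) * P.real {ω | b ≤ Z ω} := by
        rw [integral_add (integrable_const b) ((integrable_const _).indicator hA),
          integral_indicator_const _ hA]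
        simp [mul_comm]

lemma measureReal_pi_exists_mem {α : Type*} [MeasurableSpace α] (ν : Measure α)
    [IsProbabilityMeasure ν] (κ : Type*) [Fintype κ] {B : Set α} (hB : MeasurableSet B) :
    (Measure.pi fun _ : κ => ν).real {W | ∃ t, W t ∈ B} = 1 - (1 - ν.real B) ^ Fintype.card κ := by
  have hcompl : {W : κ → α | ∃ t, W t ∈ B}ᶜ = Set.univ.pi fun _ => Bᶜ := by
    ext W; simp
  have hmeas : MeasurableSet {W : κ → α | ∃ t, W t ∈ B} := by
    rw [Set.ofPred_exists]
    exact MeasurableSet.iUnion fun t => measurable_pi_apply t hB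
  rw [← probReal_compl_eq_one_sub hB, ← sub_sub_cancel 1 ((Measure.pi fun _ : κ => ν).real _),
    ← probReal_compl_eq_one_sub hmeas, hcompl]
  simp [measureReal_def, Measure.pi_pi]

lemma one_sub_one_div_pow_le {D δ : ℝ} {s : ℕ} (hD : 1 ≤ D) (hδ : 0 < δ)
    (hs : D * Real.log (1 / δ) ≤ s) : (1 - 1 / D) ^ s ≤ δ := by
  calc (1 - 1 / D) ^ s ≤ Real.exp (-(1 / D)) ^ s :=
        pow_le_pow_left₀ (by rw [sub_nonneg, div_le_one (by linarith)]; exact hD)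
          (Real.one_sub_le_exp_neg _) s
    _ = Real.exp (-(s / D)) := by rw [← Real.exp_nat_mul]; ring_nf
    _ ≤ Real.exp (-Real.log (1 / δ)) := by
        gcongr
        rwa [le_div_iff₀ (by linarith), mul_comm]
    _ = δ := by rw [one_div, Real.log_inv, neg_neg, Real.exp_log hδ]

lemma isCompact_setOf_sum_sq_eq_one {ι : Type*} [Fintype ι] :
    IsCompact {u : ι → ℝ | ∑ j, u j ^ 2 = 1} := by
  refine (isCompact_closedBall 0 1).of_isClosed_subset (isClosed_eq (by fun_prop) continuous_const)
    fun u hu => ?_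
  rw [mem_closedBall_zero_iff, pi_norm_le_iff_of_nonneg zero_le_one]
  intro j
  rw [Real.norm_eq_abs, ← sq_le_one_iff_abs_le_one]
  exact hu ▸ single_le_sum (fun i _ => sq_nonneg (u i)) (mem_univ j)

lemma sq_sum_mul_div_sum_sq_le {ι : Type*} [Fintype ι] (g w : ι → ℝ) :
    (∑ j, g j * w j) ^ 2 / ∑ i, w i ^ 2 ≤ ∑ j, g j ^ 2 :=
  div_le_of_le_mul₀ (sum_nonneg fun i _ => sq_nonneg (w i))
    (sum_nonneg fun j _ => sq_nonneg (g j)) (sum_mul_sq_le_sq_mul_sq _ _ _)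

lemma sq_sum_mul_div_sqrt {ι : Type*} [Fintype ι] (g w : ι → ℝ) :
    (∑ j, g j * (w j / √(∑ i, w i ^ 2))) ^ 2 = (∑ j, g j * w j) ^ 2 / ∑ i, w i ^ 2 := by
  simp only [mul_div_assoc', ← sum_div, div_pow,
    Real.sq_sqrt (sum_nonneg fun i _ => sq_nonneg (w i))]

section SymmetricProduct

variable {ι : Type*} [Fintype ι] {μ : Measure ℝ} [IsProbabilityMeasure μ]

lemma measurePreserving_neg_coord [μ.IsNegInvariant] [DecidableEq ι] (j : ι) :
    MeasurePreserving (fun (w : ι → ℝ) i => if i = j then -w i else w i)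
      (Measure.pi fun _ => μ) (Measure.pi fun _ => μ) :=
  measurePreserving_pi _ _ (f := fun i a => if i = j then -a else a) fun i => by
    split_ifs
    · exact Measure.measurePreserving_neg μ
    · exact MeasurePreserving.id μ

lemma measurePreserving_comp_perm (σ : Equiv.Perm ι) :
    MeasurePreserving (fun w : ι → ℝ => w ∘ σ) (Measure.pi fun _ => μ) (Measure.pi fun _ => μ) :=
  measurePreserving_arrowCongr' _ _ σ.symm (MeasurableEquiv.refl ℝ) fun _ => .id μ

lemma abs_mul_div_sum_sq_le_one (w : ι → ℝ) (j k : ι) :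
    |w j * w k / ∑ i, w i ^ 2| ≤ 1 := by
  have hj := single_le_sum (fun i _ => sq_nonneg (w i)) (mem_univ j)
  have hk := single_le_sum (fun i _ => sq_nonneg (w i)) (mem_univ k)
  rw [abs_div, abs_of_nonneg (sum_nonneg fun i _ => sq_nonneg (w i))]
  refine div_le_one_of_le₀ ?_ (sum_nonneg fun i _ => sq_nonneg (w i))
  rw [abs_mul]
  nlinarith [sq_abs (w j), sq_abs (w k), sq_nonneg (|w j| - |w k|)]

lemma integrable_mul_div_sum_sq (j k : ι) :
    Integrable (fun w : ι → ℝ => w j * w k / ∑ i, w i ^ 2) (Measure.pi fun _ => μ) :=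
  .of_bound (by fun_prop : Measurable _).aestronglyMeasurable 1
    (.of_forall fun w => abs_mul_div_sum_sq_le_one w j k)

lemma integral_mul_div_sum_sq_of_ne [μ.IsNegInvariant] {j k : ι} (hjk : j ≠ k) :
    ∫ w, w j * w k / ∑ i, w i ^ 2 ∂(Measure.pi fun _ => μ) = 0 := by
  classical
  have hflip := (measurePreserving_neg_coord (μ := μ) j).integral_comp_of_measurable
    (f := fun w : ι → ℝ => w j * w k / ∑ i, w i ^ 2) (by fun_prop)
  simp only [if_true, if_neg hjk.symm, apply_ite (· ^ 2), neg_sq, ite_self, neg_mul,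
    neg_div, integral_neg] at hflip
  linarith

lemma integral_sq_div_sum_sq [NullSingletonClass μ] (j : ι) :
    ∫ w, w j ^ 2 / ∑ i, w i ^ 2 ∂(Measure.pi fun _ => μ) = 1 / Fintype.card ι := by
  classical
  have : Nonempty ι := ⟨j⟩
  have hperm (k : ι) : ∫ w, w k ^ 2 / ∑ i, w i ^ 2 ∂(Measure.pi fun _ => μ) =
      ∫ w, w j ^ 2 / ∑ i, w i ^ 2 ∂(Measure.pi fun _ => μ) := by
    rw [← (measurePreserving_comp_perm (μ := μ) (Equiv.swap j k)).integral_comp_of_measurable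
      (f := fun w : ι → ℝ => w j ^ 2 / ∑ i, w i ^ 2) (by fun_prop)]
    congr with w
    simp only [Function.comp_apply, Equiv.swap_apply_left]
    congr 1
    exact (Equiv.sum_comp (Equiv.swap j k) fun i => w i ^ 2).symm
  have htotal : ∑ k : ι, ∫ w, w k ^ 2 / ∑ i, w i ^ 2 ∂(Measure.pi fun _ => μ) = 1 := by
    rw [← integral_finsetSum _ fun k _ => by
      simpa [sq] using integrable_mul_div_sum_sq (μ := μ) k k]
    have hae : ∀ᵐ w ∂(Measure.pi fun _ : ι => μ), ∑ k, w k ^ 2 / ∑ i, w i ^ 2 = 1 := by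
      filter_upwards [Measure.ae_ne (Measure.pi fun _ => μ) 0] with w hw
      rw [← sum_div, div_self]
      contrapose! hw
      ext i
      exact pow_eq_zero_iff two_ne_zero |>.mp <|
        congrFun ((Fintype.sum_eq_zero_iff_of_nonneg fun i => sq_nonneg (w i)).mp hw) i
    simp [integral_congr_ae hae]
  simp only [hperm, sum_const, card_univ, nsmul_eq_mul] at htotal
  rw [eq_div_iff (by positivity), mul_comm, htotal]

lemma integral_sq_sum_mul_div_sum_sq [μ.IsNegInvariant] [NullSingletonClass μ] (g : ι → ℝ) :
    ∫ w, (∑ j, g j * w j) ^ 2 / ∑ i, w i ^ 2 ∂(Measure.pi fun _ => μ) =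
      (∑ j, g j ^ 2) / Fintype.card ι := by
  classical
  have hexpand (w : ι → ℝ) : (∑ j, g j * w j) ^ 2 / ∑ i, w i ^ 2 =
      ∑ j, ∑ k, g j * g k * (w j * w k / ∑ i, w i ^ 2) := by
    simp only [sq, sum_mul_sum, sum_div]
    exact sum_congr rfl fun j _ => sum_congr rfl fun k _ => by ring
  have hterm (j k : ι) : ∫ w, w j * w k / ∑ i, w i ^ 2 ∂(Measure.pi fun _ => μ) =
      if j = k then 1 / (Fintype.card ι : ℝ) else 0 := by
    split_ifs with hjk
    · subst hjk; simpa [sq] using integral_sq_div_sum_sq (μ := μ) j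
    · exact integral_mul_div_sum_sq_of_ne hjk
  simp_rw [hexpand]
  rw [integral_finsetSum _ fun j _ => integrable_finsetSum _ fun k _ =>
    (integrable_mul_div_sum_sq j k).const_mul _]
  simp_rw [integral_finsetSum _ fun k _ => (integrable_mul_div_sum_sq _ k).const_mul _,
    integral_const_mul, hterm, mul_ite, mul_zero, sum_ite_eq, mem_univ, if_true, sum_div]
  simp [sq, div_eq_mul_inv]

lemma one_div_two_mul_card_sub_one_le_measureReal [μ.IsNegInvariant] [NullSingletonClass μ]
    [Nonempty ι] (g : ι → ℝ) :
    1 / (2 * Fintype.card ι - 1) ≤ (Measure.pi fun _ => μ).real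
      {w | (∑ j, g j ^ 2) / (2 * Fintype.card ι) ≤ (∑ j, g j * w j) ^ 2 / ∑ i, w i ^ 2} := by
  set n : ℝ := (Fintype.card ι : ℝ)
  set G := ∑ j, g j ^ 2
  have hn : 1 ≤ n := Nat.one_le_cast.mpr Fintype.card_pos
  have hG0 : 0 ≤ G := sum_nonneg fun j _ => sq_nonneg (g j)
  rcases hG0.eq_or_lt with hG | hG
  · have huniv : {w : ι → ℝ | G / (2 * n) ≤ (∑ j, g j * w j) ^ 2 / ∑ i, w i ^ 2} = .univ :=
      Set.eq_univ_of_forall fun w => by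
        rw [Set.mem_ofPred_eq, ← hG, zero_div]
        exact div_nonneg (sq_nonneg _) (sum_nonneg fun i _ => sq_nonneg (w i))
    rw [huniv, probReal_univ, div_le_one (by linarith)]
    linarith
  · have hZ : Integrable (fun w : ι → ℝ => (∑ j, g j * w j) ^ 2 / ∑ i, w i ^ 2)
        (Measure.pi fun _ => μ) :=
      .of_bound (by fun_prop : Measurable _).aestronglyMeasurable G (.of_forall fun w => by
        rw [Real.norm_eq_abs, abs_of_nonneg (div_nonneg (sq_nonneg _)
          (sum_nonneg fun i _ => sq_nonneg (w i)))]
        exact sq_sum_mul_div_sum_sq_le g w)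
    have hmarkov := integral_le_add_mul_measureReal_le (by fun_prop) hZ (b := G / (2 * n))
      (sq_sum_mul_div_sum_sq_le g)
    rw [integral_sq_sum_mul_div_sum_sq] at hmarkov
    set p := (Measure.pi fun _ => μ).real
      {w | G / (2 * n) ≤ (∑ j, g j * w j) ^ 2 / ∑ i, w i ^ 2}
    rw [div_le_iff₀ (by linarith)]
    have h2n : G / (2 * n) * 1 ≤ G / (2 * n) * ((2 * n - 1) * p) := by
      have e1 : G / n = G / (2 * n) + G / (2 * n) := by field_simp; ring
      have e2 : G - G / (2 * n) = G / (2 * n) * (2 * n - 1) := by field_simp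
      rw [e1, e2] at hmarkov
      linarith
    nlinarith [le_of_mul_le_mul_left h2n (by positivity)]

end SymmetricProduct

section TensorForm

variable {ι κ : Type*} [Fintype ι] [Fintype κ] (x : κ → ι → ℝ) (α : κ → ℝ)

def tensorForm (w u v : ι → ℝ) : ℝ :=
  ∑ i, α i * (∑ j, w j * x i j) * (∑ j, u j * x i j) * (∑ j, v j * x i j)

def tensorValues : Set ℝ :=
  {y | ∃ w u v : ι → ℝ, (∑ j, w j ^ 2 = 1) ∧ (∑ j, u j ^ 2 = 1) ∧ (∑ j, v j ^ 2 = 1) ∧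
    y = tensorForm x α w u v}

def sliceValues (w : ι → ℝ) : Set ℝ :=
  {y | ∃ u v : ι → ℝ, (∑ j, u j ^ 2 = 1) ∧ (∑ j, v j ^ 2 = 1) ∧ y = tensorForm x α w u v}

lemma continuous_tensorForm :
    Continuous fun p : (ι → ℝ) × (ι → ℝ) × (ι → ℝ) => tensorForm x α p.1 p.2.1 p.2.2 := by
  unfold tensorForm; fun_prop

lemma tensorValues_eq_image : tensorValues x α =
    (fun p => tensorForm x α p.1 p.2.1 p.2.2) '' ({u | ∑ j, u j ^ 2 = 1} ×ˢ
      {u | ∑ j, u j ^ 2 = 1} ×ˢ {u | ∑ j, u j ^ 2 = 1}) := by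
  ext y
  simp [tensorValues, eq_comm, and_assoc]

lemma sliceValues_eq_image (w : ι → ℝ) : sliceValues x α w =
    (fun p => tensorForm x α w p.1 p.2) '' ({u | ∑ j, u j ^ 2 = 1} ×ˢ {u | ∑ j, u j ^ 2 = 1}) := by
  ext y
  simp [sliceValues, eq_comm]

lemma isCompact_tensorValues : IsCompact (tensorValues x α) := by
  rw [tensorValues_eq_image]
  exact (isCompact_setOf_sum_sq_eq_one.prod (isCompact_setOf_sum_sq_eq_one.prod
    isCompact_setOf_sum_sq_eq_one)).image (continuous_tensorForm x α)

lemma bddAbove_sliceValues (w : ι → ℝ) : BddAbove (sliceValues x α w) := by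
  rw [sliceValues_eq_image]
  exact ((isCompact_setOf_sum_sq_eq_one.prod isCompact_setOf_sum_sq_eq_one).image
    ((continuous_tensorForm x α).comp (Continuous.prodMk_right w))).bddAbove

lemma tensorForm_eq_sum_mul [DecidableEq ι] (w u v : ι → ℝ) :
    tensorForm x α w u v = ∑ j, tensorForm x α (Pi.single j 1) u v * w j := by
  simp only [tensorForm, Pi.single_apply, ite_mul, one_mul, zero_mul, sum_ite_eq', mem_univ,
    if_true, sum_mul]
  rw [sum_comm]
  refine sum_congr rfl fun i _ => ?_
  rw [mul_sum univ _ (α i), sum_mul univ _ (∑ l, u l * x i l), sum_mul univ _ (∑ l, v l * x i l)]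
  exact sum_congr rfl fun j _ => by ring

lemma tensorForm_neg_mid (w u v : ι → ℝ) : tensorForm x α w (-u) v = -tensorForm x α w u v := by
  simp [tensorForm, sum_neg_distrib]

lemma abs_tensorForm_le_sSup_sliceValues {w u v : ι → ℝ} (hu : ∑ j, u j ^ 2 = 1)
    (hv : ∑ j, v j ^ 2 = 1) : |tensorForm x α w u v| ≤ sSup (sliceValues x α w) := by
  refine abs_le'.mpr ⟨le_csSup (bddAbove_sliceValues x α w) ⟨u, v, hu, hv, rfl⟩, ?_⟩
  rw [← tensorForm_neg_mid]
  exact le_csSup (bddAbove_sliceValues x α w) ⟨-u, v, by simpa using hu, hv, rfl⟩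

lemma exists_div_sqrt_le_sSup_sliceValues [Nonempty ι] :
    ∃ g : ι → ℝ, ∀ (w : ι → ℝ) (r : ℝ), (∑ j, g j ^ 2) / r ≤ (∑ j, g j * w j) ^ 2 →
      sSup (tensorValues x α) / √r ≤ sSup (sliceValues x α w) := by
  classical
  have he : ∑ j, (Pi.single (Classical.arbitrary ι) 1 : ι → ℝ) j ^ 2 = 1 := by
    simp [Pi.single_apply]
  obtain ⟨w₀, u₀, v₀, hw₀, hu₀, hv₀, hmax⟩ :=
    (isCompact_tensorValues x α).sSup_mem ⟨_, _, _, _, he, he, he, rfl⟩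
  set g : ι → ℝ := fun j => tensorForm x α (Pi.single j 1) u₀ v₀
  have hlin (w : ι → ℝ) : tensorForm x α w u₀ v₀ = ∑ j, g j * w j := tensorForm_eq_sum_mul x α _ _ _
  have hmax_le : sSup (tensorValues x α) ≤ √(∑ j, g j ^ 2) := by
    rw [hmax, hlin]
    refine (le_abs_self _).trans (Real.abs_le_sqrt ?_)
    simpa [hw₀] using sum_mul_sq_le_sq_mul_sq univ g w₀
  refine ⟨g, fun w r hr => ?_⟩
  calc sSup (tensorValues x α) / √r ≤ √(∑ j, g j ^ 2) / √r := by gcongr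
    _ = √((∑ j, g j ^ 2) / r) := (Real.sqrt_div (sum_nonneg fun j _ => sq_nonneg (g j)) r).symm
    _ ≤ |∑ j, g j * w j| := (Real.sqrt_le_sqrt hr).trans_eq (Real.sqrt_sq_eq_abs _)
    _ ≤ sSup (sliceValues x α w) := hlin w ▸ abs_tensorForm_le_sSup_sliceValues x α hu₀ hv₀

end TensorForm

instance isNegInvariant_gaussianReal_zero (v : NNReal) : (gaussianReal 0 v).IsNegInvariant :=
  ⟨(gaussianReal_map_neg (μ := 0) (v := v)).trans (by rw [neg_zero])⟩

theorem random_restarts_tensor_approx_general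
    (d m s : ℕ) (hd : 0 < d)
    (x : Fin m → Fin d → ℝ) (α : Fin m → ℝ)
    (F : (Fin d → ℝ) → (Fin d → ℝ) → (Fin d → ℝ) → ℝ)
    (hF : ∀ w u v, F w u v =
      ∑ i, α i * (∑ j, w j * x i j) * (∑ j, u j * x i j) * (∑ j, v j * x i j)) :
    (((Measure.pi fun _ : Fin s =>
          (Measure.pi fun _ : Fin d => gaussianReal 0 1)))
        {W : Fin s → Fin d → ℝ | ∃ t : Fin s,
          sSup {y : ℝ | ∃ u v : Fin d → ℝ, (∑ j, u j ^ 2 = 1) ∧ (∑ j, v j ^ 2 = 1) ∧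
              y = F (fun j => W t j / Real.sqrt (∑ i, W t i ^ 2)) u v} ≥
            (1 / Real.sqrt (2 * d)) *
              sSup {y : ℝ | ∃ w u v : Fin d → ℝ,
                (∑ j, w j ^ 2 = 1) ∧ (∑ j, u j ^ 2 = 1) ∧ (∑ j, v j ^ 2 = 1) ∧
                y = F w u v}}).toReal ≥
      1 - (1 - 1 / (2 * d - 1)) ^ s ∧
    ∀ δ : ℝ, 0 < δ → δ < 1 → (s : ℝ) ≥ (2 * d - 1) * Real.log (1 / δ) →
      (((Measure.pi fun _ : Fin s =>
            (Measure.pi fun _ : Fin d => gaussianReal 0 1)))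
          {W : Fin s → Fin d → ℝ | ∃ t : Fin s,
            sSup {y : ℝ | ∃ u v : Fin d → ℝ, (∑ j, u j ^ 2 = 1) ∧ (∑ j, v j ^ 2 = 1) ∧
                y = F (fun j => W t j / Real.sqrt (∑ i, W t i ^ 2)) u v} ≥
              (1 / Real.sqrt (2 * d)) *
                sSup {y : ℝ | ∃ w u v : Fin d → ℝ,
                  (∑ j, w j ^ 2 = 1) ∧ (∑ j, u j ^ 2 = 1) ∧ (∑ j, v j ^ 2 = 1) ∧
                  y = F w u v}}).toReal ≥ 1 - δ := by
  obtain rfl : F = tensorForm x α := funext fun w => funext fun u => funext fun v => hF w u v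
  have : Nonempty (Fin d) := ⟨⟨0, hd⟩⟩
  have : NullSingletonClass (gaussianReal 0 1) := nullSingletonClass_gaussianReal one_ne_zero
  obtain ⟨g, hg⟩ := exists_div_sqrt_le_sSup_sliceValues x α
  set B : Set (Fin d → ℝ) :=
    {w | (∑ j, g j ^ 2) / (2 * d) ≤ (∑ j, g j * w j) ^ 2 / ∑ i, w i ^ 2}
  have hB : MeasurableSet B := measurableSet_le (by fun_prop) (by fun_prop)
  have hpB : 1 / (2 * d - 1) ≤ (Measure.pi fun _ : Fin d => gaussianReal 0 1).real B := by
    simpa using one_div_two_mul_card_sub_one_le_measureReal (μ := gaussianReal 0 1) g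
  have hgood (w : Fin d → ℝ) (hw : w ∈ B) : 1 / √(2 * d) * sSup (tensorValues x α) ≤
      sSup (sliceValues x α fun j => w j / √(∑ i, w i ^ 2)) := by
    rw [one_div_mul_eq_div]
    exact hg _ _ (by rwa [sq_sum_mul_div_sqrt])
  have hsuccess : 1 - (1 - 1 / (2 * d - 1)) ^ s ≤
      (Measure.pi fun _ : Fin s => Measure.pi fun _ : Fin d => gaussianReal 0 1).real
        {W | ∃ t, W t ∈ B} := by
    rw [measureReal_pi_exists_mem _ _ hB, Fintype.card_fin]
    gcongr
    linarith [measureReal_le_one (μ := Measure.pi fun _ : Fin d => gaussianReal 0 1) (s := B)]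
  have hD : (1 : ℝ) ≤ 2 * d - 1 := by linarith [(Nat.one_le_cast (α := ℝ)).mpr hd]
  refine ⟨?_, fun δ hδ _ hsδ =>
    (sub_le_sub_left (one_sub_one_div_pow_le hD hδ hsδ) 1).trans ?_⟩ <;>
  exact hsuccess.trans (measureReal_mono fun W ⟨t, ht⟩ => ⟨t, hgood _ ht⟩)

/-- Probabilistic content of Lemma A.3: with `s` independent Gaussian restarts
`w₁, …, w_s` in `ℝ^d`, with probability at least `1 − (1 − 1/(2d−1))^s` some
normalized direction `ŵ_t` admits a bilinear completion within a factor `1/√(2d)`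
of the global maximum of the trilinear form `F`; in particular, for
`s ≥ (2d−1)·ln(1/δ)` this holds with probability at least `1 − δ`. -/
theorem random_restarts_tensor_approx
    (d m s : ℕ) (hd : 0 < d) (hm : 0 < m) (hs : 0 < s)
    (x : Fin m → Fin d → ℝ) (α : Fin m → ℝ)
    (F : (Fin d → ℝ) → (Fin d → ℝ) → (Fin d → ℝ) → ℝ)
    (hF : ∀ w u v, F w u v =
      ∑ i, α i * (∑ j, w j * x i j) * (∑ j, u j * x i j) * (∑ j, v j * x i j)) :
    (((Measure.pi fun _ : Fin s =>
          (Measure.pi fun _ : Fin d => gaussianReal 0 1)))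
        {W : Fin s → Fin d → ℝ | ∃ t : Fin s,
          sSup {y : ℝ | ∃ u v : Fin d → ℝ, (∑ j, u j ^ 2 = 1) ∧ (∑ j, v j ^ 2 = 1) ∧
              y = F (fun j => W t j / Real.sqrt (∑ i, W t i ^ 2)) u v} ≥
            (1 / Real.sqrt (2 * d)) *
              sSup {y : ℝ | ∃ w u v : Fin d → ℝ,
                (∑ j, w j ^ 2 = 1) ∧ (∑ j, u j ^ 2 = 1) ∧ (∑ j, v j ^ 2 = 1) ∧
                y = F w u v}}).toReal ≥
      1 - (1 - 1 / (2 * d - 1)) ^ s ∧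
    ∀ δ : ℝ, 0 < δ → δ < 1 → (s : ℝ) ≥ (2 * d - 1) * Real.log (1 / δ) →
      (((Measure.pi fun _ : Fin s =>
            (Measure.pi fun _ : Fin d => gaussianReal 0 1)))
          {W : Fin s → Fin d → ℝ | ∃ t : Fin s,
            sSup {y : ℝ | ∃ u v : Fin d → ℝ, (∑ j, u j ^ 2 = 1) ∧ (∑ j, v j ^ 2 = 1) ∧
                y = F (fun j => W t j / Real.sqrt (∑ i, W t i ^ 2)) u v} ≥
              (1 / Real.sqrt (2 * d)) *
                sSup {y : ℝ | ∃ w u v : Fin d → ℝ,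
                  (∑ j, w j ^ 2 = 1) ∧ (∑ j, u j ^ 2 = 1) ∧ (∑ j, v j ^ 2 = 1) ∧
                  y = F w u v}}).toReal ≥ 1 - δ :=
  random_restarts_tensor_approx_general d m s hd x α F hF
end
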